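/- arXiv:1603.08028 — 3 statements merged into one kernel-verified Lean document; each statement's English description precedes it below -/
import Mathlib

section
/- Let $G_1$ and $G_2$ be graphs on vertex set $[n]$ with a common community labeling $\mathcal{C}: [n] \to [C]$. For a permutation $\phi$ of $[n]$, let $\mathcal{S}_\phi$ be the symmetric difference of $E(G_1)$ and $\phi(E(G_2))$, and let $\mathcal{E}^{in}_\phi$ and $\mathcal{E}^{out}_\phi$ be the intra-community and inter-community parts of $\mathcal{S}_\phi$. If $\phi$ is an automorphism of $G_1 \cap G_2$ that preserves the community labeling (i.e. $\mathcal{C}(\phi(i)) = \mathcal{C}(i)$ for all $i$), then $|\mathcal{E}^{in}_\phi| \leq |\mathcal{E}^{in}_{I}|$ and $|\mathcal{E}^{out}_\phi| \leq |\mathcal{E}^{out}_{I}|$, where $I$ is the identity permutation. -/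
open scoped Classical

/-- The symmetric difference `S_φ` of `E(G₁)` and `σ_φ(E(G₂))`. -/
noncomputable def symmDiffEdges (n : ℕ) (E1 E2 : Finset (Sym2 (Fin n)))
    (φ : Equiv.Perm (Fin n)) : Finset (Sym2 (Fin n)) :=
  (E1 ∪ E2.image (Sym2.map φ)) \ (E1 ∩ E2.image (Sym2.map φ))

/-- The predicate that both endpoints of a pair have equal community labels. -/
def sameComm {n C : ℕ} (comm : Fin n → Fin C) (e : Sym2 (Fin n)) : Prop :=
  Sym2.lift ⟨fun i j => comm i = comm j, fun i j => by simp [eq_comm]⟩ e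

lemma aux_card {α : Type*} [DecidableEq α] (A B F : Finset α) (p : α → Prop) [DecidablePred p]
    (hF : (F.filter p).card = (B.filter p).card)
    (hsub : A ∩ B ⊆ A ∩ F) :
    (((A ∪ F) \ (A ∩ F)).filter p).card ≤ (((A ∪ B) \ (A ∩ B)).filter p).card := by
  have hsd : ∀ (X Y : Finset α), ((X \ Y).filter p) = (X.filter p) \ (Y.filter p) := by
    intro X Y; ext a; simp [Finset.mem_filter, Finset.mem_sdiff]; tauto
  have hkey : ∀ (X Y : Finset α),
      (((X ∪ Y) \ (X ∩ Y)).filter p).card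
        = (X.filter p).card + (Y.filter p).card - 2 * ((X ∩ Y).filter p).card := by
    intro X Y
    rw [hsd, Finset.card_sdiff_of_subset]
    · have h1 : ((X ∪ Y).filter p) = X.filter p ∪ Y.filter p := Finset.filter_union _ _ _
      have h2 : ((X ∩ Y).filter p) = X.filter p ∩ Y.filter p := Finset.filter_inter_distrib _ _ _
      have h3 := Finset.card_union_add_card_inter (X.filter p) (Y.filter p)
      have h4 : (X.filter p ∩ Y.filter p).card ≤ (X.filter p ∪ Y.filter p).card :=
        Finset.card_le_card (Finset.inter_subset_union)
      rw [h1, h2]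
      omega
    · exact Finset.filter_subset_filter _ Finset.inter_subset_union
  rw [hkey, hkey]
  have h5 : ((A ∩ B).filter p).card ≤ ((A ∩ F).filter p).card :=
    Finset.card_le_card (Finset.filter_subset_filter _ hsub)
  have h6 : ((A ∩ F).filter p).card ≤ (A.filter p).card :=
    Finset.card_le_card (Finset.filter_subset_filter _ Finset.inter_subset_left)
  have h7 : ((A ∩ B).filter p).card ≤ (A.filter p).card :=
    Finset.card_le_card (Finset.filter_subset_filter _ Finset.inter_subset_left)
  have h8 : ((A ∩ F).filter p).card ≤ (F.filter p).card :=
    Finset.card_le_card (Finset.filter_subset_filter _ Finset.inter_subset_right)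
  omega

/-- If `φ` is a community-preserving automorphism of `G₁ ∩ G₂`, then the intra-community and
inter-community parts of the symmetric edge difference `S_φ` are no larger than those of the
identity permutation. -/
theorem stmt_5 (n C : ℕ) (E1 E2 : Finset (Sym2 (Fin n))) (comm : Fin n → Fin C)
    (φ : Equiv.Perm (Fin n))
    (hauto : (E1 ∩ E2).image (Sym2.map φ) = E1 ∩ E2)
    (hcomm : ∀ i, comm (φ i) = comm i) :
    ((symmDiffEdges n E1 E2 φ).filter fun e => sameComm comm e).card ≤
      ((symmDiffEdges n E1 E2 1).filter fun e => sameComm comm e).card ∧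
    ((symmDiffEdges n E1 E2 φ).filter fun e => ¬ sameComm comm e).card ≤
      ((symmDiffEdges n E1 E2 1).filter fun e => ¬ sameComm comm e).card := by
  have hinj : Function.Injective (Sym2.map (φ : Fin n → Fin n)) :=
    Sym2.map.injective φ.injective
  have hpres : ∀ e, sameComm comm (Sym2.map φ e) ↔ sameComm comm e := by
    intro e
    induction e using Sym2.ind with
    | _ i j => simp [sameComm, hcomm]
  set F := E2.image (Sym2.map (φ : Fin n → Fin n)) with hFdef
  have hid : E2.image (Sym2.map ((1 : Equiv.Perm (Fin n)) : Fin n → Fin n)) = E2 := by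
    simp [Sym2.map_id']
  have hsub : E1 ∩ E2 ⊆ E1 ∩ F := by
    rw [← hauto]
    intro e he
    simp only [Finset.mem_image] at he
    obtain ⟨a, ha, rfl⟩ := he
    simp only [Finset.mem_inter] at ha ⊢
    constructor
    · have : Sym2.map (φ : Fin n → Fin n) a ∈ (E1 ∩ E2).image (Sym2.map φ) :=
        Finset.mem_image_of_mem _ (Finset.mem_inter.2 ha)
      rw [hauto] at this
      exact (Finset.mem_inter.1 this).1
    · exact Finset.mem_image_of_mem _ ha.2
  have hcard : ∀ (p : Sym2 (Fin n) → Prop) [DecidablePred p],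
      (∀ e, p (Sym2.map φ e) ↔ p e) → (F.filter p).card = (E2.filter p).card := by
    intro p _ hp
    have : F.filter p = (E2.filter p).image (Sym2.map (φ : Fin n → Fin n)) := by
      ext e
      simp only [hFdef, Finset.mem_filter, Finset.mem_image]
      constructor
      · rintro ⟨⟨a, ha, rfl⟩, hpe⟩
        exact ⟨a, ⟨ha, (hp a).1 hpe⟩, rfl⟩
      · rintro ⟨a, ⟨ha, hpa⟩, rfl⟩
        exact ⟨⟨a, ha, rfl⟩, (hp a).2 hpa⟩
    rw [this, Finset.card_image_of_injective _ hinj]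
  constructor
  · have := aux_card E1 E2 F (fun e => sameComm comm e)
      (hcard _ (fun e => hpres e)) hsub
    simpa [symmDiffEdges, hid, hFdef] using this
  · have := aux_card E1 E2 F (fun e => ¬ sameComm comm e)
      (hcard _ (fun e => by simp [hpres e])) hsub
    simpa [symmDiffEdges, hid, hFdef] using this
end

section
/- Let $G_1, G_2$ be graphs on $[n]$ with community labeling $\mathcal{C}$, and let $c_1, c_2 \in (0, 1]$. Define the posterior score of a permutation $\phi$ as $c_1^{|\mathcal{E}^{in}_\phi|} c_2^{|\mathcal{E}^{out}_\phi|}$. If $\phi$ is a community-preserving automorphism of $G_1 \cap G_2$, then the score of $\phi$ is at least the score of the identity permutation $I$. -/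
open scoped Classical

lemma card_filter_symm (α : Type*) [DecidableEq α] (X Y : Finset α) (p : α → Prop)
    [DecidablePred p] :
    (((X ∪ Y) \ (X ∩ Y)).filter p).card + 2 * ((X ∩ Y).filter p).card
      = (X.filter p).card + (Y.filter p).card := by
  have hsd : ((X ∪ Y) \ (X ∩ Y)).filter p = ((X ∪ Y).filter p) \ ((X ∩ Y).filter p) := by
    ext a; simp only [Finset.mem_filter, Finset.mem_sdiff]; tauto
  have hfi : (X ∩ Y).filter p = X.filter p ∩ Y.filter p := by
    ext a; simp only [Finset.mem_filter, Finset.mem_inter]; tauto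
  rw [hsd, Finset.filter_union, hfi]
  have h1 := Finset.card_sdiff_of_subset (Finset.inter_subset_union
    (s := X.filter p) (t := Y.filter p))
  have h2 := Finset.card_union_add_card_inter (X.filter p) (Y.filter p)
  have h3 : (X.filter p ∩ Y.filter p) ⊆ X.filter p ∪ Y.filter p :=
    Finset.inter_subset_union
  have h4 := Finset.card_le_card h3

  omega

lemma key (n C : ℕ) (E1 E2 : Finset (Sym2 (Fin n))) (comm : Fin n → Fin C)
    (φ : Equiv.Perm (Fin n))
    (hauto : (E1 ∩ E2).image (Sym2.map φ) = E1 ∩ E2)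
    (hcomm : ∀ i, comm (φ i) = comm i) (p : Sym2 (Fin n) → Prop) [DecidablePred p]
    (hp : ∀ e, p (Sym2.map φ e) ↔ p e) :
    ((symmDiffEdges n E1 E2 φ).filter p).card ≤
      ((symmDiffEdges n E1 E2 1).filter p).card := by
  set B := E2.image (Sym2.map φ) with hB
  have hinj : Function.Injective (Sym2.map (φ : Fin n → Fin n)) :=
    Sym2.map.injective φ.injective
  -- card of filter of B equals card of filter of E2
  have hBcard : (B.filter p).card = (E2.filter p).card := by
    have : B.filter p = (E2.filter p).image (Sym2.map φ) := by
      ext e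
      simp only [hB, Finset.mem_filter, Finset.mem_image]
      constructor
      · rintro ⟨⟨a, ha, rfl⟩, hpe⟩
        exact ⟨a, ⟨ha, (hp a).mp hpe⟩, rfl⟩
      · rintro ⟨a, ⟨ha, hpa⟩, rfl⟩
        exact ⟨⟨a, ha, rfl⟩, (hp a).mpr hpa⟩
    rw [this, Finset.card_image_of_injective _ hinj]
  have hsub : E1 ∩ E2 ⊆ E1 ∩ B := by
    intro e he
    rw [Finset.mem_inter]
    refine ⟨(Finset.mem_inter.mp he).1, ?_⟩
    have : e ∈ (E1 ∩ E2).image (Sym2.map φ) := by rw [hauto]; exact he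
    obtain ⟨a, ha, rfl⟩ := Finset.mem_image.mp this
    exact Finset.mem_image_of_mem _ (Finset.mem_inter.mp ha).2
  have hmono : ((E1 ∩ E2).filter p).card ≤ ((E1 ∩ B).filter p).card :=
    Finset.card_le_card (Finset.filter_subset_filter _ hsub)
  have hId : E2.image (Sym2.map (1 : Equiv.Perm (Fin n))) = E2 := by
    have : (Sym2.map ((1 : Equiv.Perm (Fin n)) : Fin n → Fin n)) = id := by
      funext e
      simp [Sym2.map_id]
    rw [this, Finset.image_id]
  have h1 := card_filter_symm _ E1 B p
  have h2 := card_filter_symm _ E1 E2 p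
  unfold symmDiffEdges
  rw [hId, ← hB]
  omega

/-- With `c1, c2 ∈ (0,1]`, the posterior score `c1^{|E^in_φ|} c2^{|E^out_φ|}` of a
community-preserving automorphism `φ` of `G₁ ∩ G₂` is at least the score of the identity. -/
theorem stmt_6 (n C : ℕ) (E1 E2 : Finset (Sym2 (Fin n))) (comm : Fin n → Fin C)
    (c1 c2 : ℝ) (hc1 : 0 < c1) (hc1' : c1 ≤ 1) (hc2 : 0 < c2) (hc2' : c2 ≤ 1)
    (φ : Equiv.Perm (Fin n))
    (hauto : (E1 ∩ E2).image (Sym2.map φ) = E1 ∩ E2)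
    (hcomm : ∀ i, comm (φ i) = comm i) :
    c1 ^ ((symmDiffEdges n E1 E2 1).filter fun e => sameComm comm e).card *
        c2 ^ ((symmDiffEdges n E1 E2 1).filter fun e => ¬ sameComm comm e).card ≤
      c1 ^ ((symmDiffEdges n E1 E2 φ).filter fun e => sameComm comm e).card *
        c2 ^ ((symmDiffEdges n E1 E2 φ).filter fun e => ¬ sameComm comm e).card := by
  have hpres : ∀ e : Sym2 (Fin n), sameComm comm (Sym2.map φ e) ↔ sameComm comm e := by
    intro e
    induction e using Sym2.ind with
    | _ x y => simp [sameComm, hcomm]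
  have hin := key n C E1 E2 comm φ hauto hcomm (fun e => sameComm comm e) hpres
  have hout := key n C E1 E2 comm φ hauto hcomm (fun e => ¬ sameComm comm e)
    (fun e => by simp [hpres e])
  exact mul_le_mul (pow_le_pow_of_le_one hc1.le hc1' hin)
    (pow_le_pow_of_le_one hc2.le hc2' hout)
    (pow_nonneg hc2.le _) (pow_nonneg hc1.le _)
end

section
/- Let $C = 2$, $a > b > 0$, $0 < s_1 \le 1$, $0 < s_2 \le 1$. Suppose $\sqrt{a s_2} - \sqrt{b s_2} > \sqrt{2}$ and $\left(\frac{a-b}{a+b}\right)^2 + (1 - s_1)^2 > 1$. Then there exists $t \in (0, 1]$ such that $\sqrt{a s_2 t} - \sqrt{b s_2 t} > \sqrt{2}$ and $(a + b) s_1 s_2 t < 2$. -/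
/-- Two-community subsampling corollary: if `√(a s2) - √(b s2) > √2` (community recovery
possible in `G₂`) and `((a-b)/(a+b))² + (1-s1)² > 1`, then there is a subsampling probability
`t ∈ (0,1]` such that `√(a s2 t) - √(b s2 t) > √2` (community recovery still possible) and
`(a+b) s1 s2 t < 2` (exact deanonymization impossible). -/
theorem stmt_10 (a b s1 s2 : ℝ) (hb : 0 < b) (hab : b < a) (hs1 : 0 < s1) (hs1' : s1 ≤ 1)
    (hs2 : 0 < s2) (hs2' : s2 ≤ 1)
    (hrec : Real.sqrt (a * s2) - Real.sqrt (b * s2) > Real.sqrt 2)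
    (hmain : ((a - b) / (a + b)) ^ 2 + (1 - s1) ^ 2 > 1) :
    ∃ t : ℝ, 0 < t ∧ t ≤ 1 ∧
      Real.sqrt (a * s2 * t) - Real.sqrt (b * s2 * t) > Real.sqrt 2 ∧
      (a + b) * s1 * s2 * t < 2 := by
  have ha : 0 < a := hb.trans hab
  have habp : 0 < a + b := by linarith
  -- s1 < 1
  have hs1lt : s1 < 1 := by
    by_contra h
    push_neg at h
    have hs11 : s1 = 1 := le_antisymm hs1' h
    have hlt : ((a - b) / (a + b)) ^ 2 < 1 := by
      have h1 : (a - b) / (a + b) < 1 := (div_lt_one habp).mpr (by linarith)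
      have h2 : 0 < (a - b) / (a + b) := div_pos (by linarith) habp
      nlinarith
    rw [hs11] at hmain
    nlinarith
  -- from hmain: (1 - (1-s1)^2) * (a+b)^2 < (a-b)^2
  have hm : (1 - (1 - s1) ^ 2) * (a + b) ^ 2 < (a - b) ^ 2 := by
    have hm1 : 1 - (1 - s1) ^ 2 < ((a - b)) ^ 2 / ((a + b)) ^ 2 := by
      rw [← div_pow]; linarith
    rw [lt_div_iff₀ (by positivity)] at hm1
    linarith
  -- 4ab < ((a+b)(1-s1))^2
  have h4ab : 4 * (a * b) < ((a + b) * (1 - s1)) ^ 2 := by nlinarith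
  -- 2√(ab) < (a+b)(1-s1)
  have hsab : Real.sqrt (a * b) ≥ 0 := Real.sqrt_nonneg _
  have hsab2 : Real.sqrt (a * b) ^ 2 = a * b := Real.sq_sqrt (by positivity)
  have hrhs : 0 < (a + b) * (1 - s1) := by
    have := mul_pos ha hb
    nlinarith
  have h2sab : 2 * Real.sqrt (a * b) < (a + b) * (1 - s1) := by nlinarith
  -- key: (a+b) s1 < (√a - √b)^2
  have hsa2 : Real.sqrt a ^ 2 = a := Real.sq_sqrt ha.le
  have hsb2 : Real.sqrt b ^ 2 = b := Real.sq_sqrt hb.le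
  have hmul : Real.sqrt a * Real.sqrt b = Real.sqrt (a * b) :=
    (Real.sqrt_mul ha.le b).symm
  have key : (a + b) * s1 < (Real.sqrt a - Real.sqrt b) ^ 2 := by nlinarith
  -- D := √(a s2) - √(b s2)
  set D := Real.sqrt (a * s2) - Real.sqrt (b * s2) with hDdef
  have hDfac : D = (Real.sqrt a - Real.sqrt b) * Real.sqrt s2 := by
    rw [hDdef, Real.sqrt_mul ha.le, Real.sqrt_mul hb.le]; ring
  have hss2 : Real.sqrt s2 ^ 2 = s2 := Real.sq_sqrt hs2.le
  have hD2 : D ^ 2 = (Real.sqrt a - Real.sqrt b) ^ 2 * s2 := by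
    rw [hDfac, mul_pow, hss2]
  have hsqrt2 : Real.sqrt 2 ≥ 0 := Real.sqrt_nonneg 2
  have hsqrt22 : Real.sqrt 2 ^ 2 = 2 := Real.sq_sqrt (by norm_num)
  have hDpos : 0 < D := lt_of_le_of_lt hsqrt2 hrec
  have hD2gt : 2 < D ^ 2 := by
    calc 2 = Real.sqrt 2 ^ 2 := hsqrt22.symm
    _ < D ^ 2 := by exact pow_lt_pow_left₀ hrec hsqrt2 (by norm_num)
  set K := (a + b) * s1 * s2 with hKdef
  have hK : 0 < K := by positivity
  have hKD : K < D ^ 2 := by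
    rw [hD2, hKdef]
    have := mul_lt_mul_of_pos_right key hs2
    linarith
  -- choose t
  set t := min 1 ((2 / D ^ 2 + 2 / K) / 2) with htdef
  have hD2pos : 0 < D ^ 2 := pow_pos hDpos 2
  have ht0pos : 0 < 2 / D ^ 2 := div_pos two_pos hD2pos
  have ht1pos : 0 < 2 / K := div_pos two_pos hK
  have ht01 : 2 / D ^ 2 < 2 / K := by
    rw [div_lt_div_iff₀ hD2pos hK]; linarith
  have htpos : 0 < t := lt_min one_pos (by linarith)
  have htle1 : t ≤ 1 := min_le_left _ _
  have ht0lt1 : 2 / D ^ 2 < 1 := by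
    rw [div_lt_one hD2pos]; linarith
  have htgt : 2 / D ^ 2 < t := lt_min ht0lt1 (by linarith)
  have htlt : t < 2 / K := by
    have h := min_le_right (1:ℝ) ((2 / D ^ 2 + 2 / K) / 2)
    calc t ≤ (2 / D ^ 2 + 2 / K) / 2 := h
    _ < 2 / K := by linarith
  clear_value t
  refine ⟨t, htpos, htle1, ?_, ?_⟩
  · -- √(a s2 t) - √(b s2 t) = D √t > √2
    have hst : Real.sqrt t ^ 2 = t := Real.sq_sqrt htpos.le
    have hstpos : 0 < Real.sqrt t := Real.sqrt_pos.mpr htpos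
    have h1 : Real.sqrt (a * s2 * t) = Real.sqrt (a * s2) * Real.sqrt t :=
      Real.sqrt_mul (by positivity) t
    have h2 : Real.sqrt (b * s2 * t) = Real.sqrt (b * s2) * Real.sqrt t :=
      Real.sqrt_mul (by positivity) t
    rw [h1, h2]
    have hfac : Real.sqrt (a * s2) * Real.sqrt t - Real.sqrt (b * s2) * Real.sqrt t
        = D * Real.sqrt t := by rw [hDdef]; ring
    rw [hfac]
    -- (D √t)^2 = D^2 t > 2, D √t ≥ 0
    have hsq : (D * Real.sqrt t) ^ 2 = D ^ 2 * t := by rw [mul_pow, hst]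
    have hgt2 : 2 < D ^ 2 * t := by
      have h := (div_lt_iff₀ hD2pos).mp htgt
      have hc : t * D ^ 2 = D ^ 2 * t := mul_comm t (D ^ 2)
      linarith
    have hy : 0 < D * Real.sqrt t := mul_pos hDpos hstpos
    clear_value D K
    clear hmain htdef ht0pos ht1pos ht01 ht0lt1 htgt htlt hDdef hKdef hDfac h1 h2 hfac
    have hlt2 : Real.sqrt 2 ^ 2 < (D * Real.sqrt t) ^ 2 := by rw [hsqrt22, hsq]; exact hgt2
    exact lt_of_pow_lt_pow_left₀ 2 hy.le hlt2
  · have h := (lt_div_iff₀ hK).mp htlt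
    have hc : t * K = K * t := mul_comm t K
    clear_value D K
    clear hmain htdef ht0pos ht1pos ht01 ht0lt1 htgt htlt hDdef hDfac
    linarith
end
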